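/- Correctness of the naive algorithm: let p ∈ ℝ[x] and m ≥ 0. Suppose (𝓛⁽ʲ⁾(p))(v₀) = 0 for every 0 ≤ j ≤ m, and that 𝓛⁽ᵐ⁺¹⁾(p) lies in the ideal I_m of ℝ[x] generated by {𝓛⁽⁰⁾(p), 𝓛⁽¹⁾(p), …, 𝓛⁽ᵐ⁾(p)}. Then I_m is a Φ-invariant and it is the smallest Φ-invariant containing p; in particular 𝓛⁽ʲ⁾(p) ∈ I_m for every j ≥ 0, and p ∈ Z_Φ. -/

import Mathlib

open MvPolynomial

/-- The Lie derivative of a polynomial along the polynomial vector field `F`. -/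
noncomputable def lieDeriv {N : ℕ} (F : Fin N → MvPolynomial (Fin N) ℝ)
    (p : MvPolynomial (Fin N) ℝ) : MvPolynomial (Fin N) ℝ :=
  ∑ i, pderiv i p * F i

/-- `I` is a `Φ`-invariant ideal: every element vanishes at `v₀` and `I` is closed
under Lie derivation. -/
def IsInvariantIdeal {N : ℕ} (F : Fin N → MvPolynomial (Fin N) ℝ) (v₀ : Fin N → ℝ)
    (I : Ideal (MvPolynomial (Fin N) ℝ)) : Prop :=
  (∀ p ∈ I, eval v₀ p = 0) ∧ ∀ p ∈ I, lieDeriv F p ∈ I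

/-- `Z_Φ`: the set of polynomials whose induced behaviour vanishes identically on `D`. -/
def Zset {N : ℕ} (x : ℝ → Fin N → ℝ) (D : Set ℝ) : Set (MvPolynomial (Fin N) ℝ) :=
  {p | ∀ t ∈ D, eval (x t) p = 0}

/-!
Since `𝓛` is a derivation, `𝓛(∑ aⱼ 𝓛⁽ʲ⁾p) = ∑ (𝓛 aⱼ) 𝓛⁽ʲ⁾p + ∑ aⱼ 𝓛⁽ʲ⁺¹⁾p`, so an ideal whose
generators are mapped into it by `𝓛` is closed under `𝓛`; with `𝓛⁽ᵐ⁺¹⁾p ∈ I_m` this makes `I_m`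
invariant, and any invariant ideal containing `p` contains every `𝓛⁽ʲ⁾p`, hence `I_m`.
Along a solution, `d/dt q(x(t)) = (𝓛 q)(x(t))`, so all derivatives of the analytic function
`t ↦ q(x(t))` vanish at `0` for `q` in an invariant ideal, and by the identity theorem it vanishes on
the interval `D`.
-/

open Set Filter

section IterateIdeal

variable {A : Type*} [CommRing A]

/-- The ideal `I_m` of the naive algorithm, for `f = 𝓛` and `a = p`. -/
def iterateIdeal (f : A → A) (a : A) (m : ℕ) : Ideal A :=
  Ideal.span {q | ∃ j ≤ m, q = f^[j] a}

theorem iterate_mem_iterateIdeal {f : A → A} {a : A} {m j : ℕ} (hj : j ≤ m) :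
    f^[j] a ∈ iterateIdeal f a m :=
  Ideal.subset_span ⟨j, hj, rfl⟩

theorem iterateIdeal_le_iff {f : A → A} {a : A} {m : ℕ} {J : Ideal A} :
    iterateIdeal f a m ≤ J ↔ ∀ j ≤ m, f^[j] a ∈ J := by
  simp only [iterateIdeal, Ideal.span_le, ofPred_subset, forall_exists_index, and_imp]
  exact ⟨fun h j hj => h _ j hj rfl, fun h _ j hj hq => hq ▸ h j hj⟩

theorem Derivation.mapsTo_span {R : Type*} [CommSemiring R] [Algebra R A]
    (d : Derivation R A A) {s : Set A} (hs : MapsTo d s (Ideal.span s)) :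
    MapsTo d (Ideal.span s) (Ideal.span s) := by
  intro q hq
  induction hq using Submodule.span_induction with
  | mem q hq => exact hs hq
  | zero => simp
  | add a b _ _ ha hb => rw [map_add]; exact add_mem ha hb
  | smul a q hq ih =>
    rw [smul_eq_mul, Derivation.leibniz, smul_eq_mul, smul_eq_mul]
    exact add_mem (Ideal.mul_mem_left _ a ih) (Ideal.mul_mem_right (d a) _ hq)

theorem Derivation.mapsTo_iterateIdeal {R : Type*} [CommSemiring R] [Algebra R A]
    (d : Derivation R A A) {a : A} {m : ℕ} (hm : d^[m + 1] a ∈ iterateIdeal d a m) :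
    MapsTo d (iterateIdeal d a m) (iterateIdeal d a m) := by
  refine d.mapsTo_span ?_
  rintro _ ⟨j, hj, rfl⟩
  rw [← Function.iterate_succ_apply' d j]
  rcases hj.lt_or_eq with hj | rfl
  · exact iterate_mem_iterateIdeal hj
  · exact hm

end IterateIdeal

theorem AnalyticOnNhd.eqOn_zero_of_iteratedDeriv_eq_zero {𝕜 E : Type*} [RCLike 𝕜]
    [NormedAddCommGroup E] [NormedSpace 𝕜 E] [CompleteSpace E] {f : 𝕜 → E} {U : Set 𝕜}
    {z₀ : 𝕜} (hf : AnalyticOnNhd 𝕜 f U) (hU : IsPreconnected U) (h₀ : z₀ ∈ U)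
    (hderiv : ∀ n, iteratedDeriv n f z₀ = 0) : EqOn f 0 U := by
  have horder : analyticOrderAt f z₀ = ⊤ := ENat.eq_top_iff_forall_ge.2 fun n =>
    (natCast_le_analyticOrderAt_iff_iteratedDeriv_eq_zero (hf z₀ h₀)).2 fun i _ => hderiv i
  exact hf.eqOn_zero_of_preconnected_of_eventuallyEq_zero hU h₀ (analyticOrderAt_eq_top.1 horder)

section LieDerivative

variable {N : ℕ} {F : Fin N → MvPolynomial (Fin N) ℝ}

noncomputable def lieDerivation (F : Fin N → MvPolynomial (Fin N) ℝ) :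
    Derivation ℝ (MvPolynomial (Fin N) ℝ) (MvPolynomial (Fin N) ℝ) :=
  ∑ i, F i • pderiv i

@[simp]
theorem coe_lieDerivation (F : Fin N → MvPolynomial (Fin N) ℝ) :
    ⇑(lieDerivation F) = lieDeriv F := by
  ext1 p
  have hsum := congr_fun (map_sum Derivation.coeFnAddMonoidHom (fun i => F i • pderiv i) .univ) p
  simp only [Derivation.coeFnAddMonoidHom_apply, Finset.sum_apply, Derivation.smul_apply,
    smul_eq_mul] at hsum
  exact hsum.trans (Finset.sum_congr rfl fun i _ => mul_comm _ _)

theorem lieDeriv_X (F : Fin N → MvPolynomial (Fin N) ℝ) (i : Fin N) : lieDeriv F (X i) = F i := by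
  simp [lieDeriv, pderiv_X, Pi.single_apply]

theorem IsInvariantIdeal.iterate_mem {v₀ : Fin N → ℝ} {J : Ideal (MvPolynomial (Fin N) ℝ)}
    (hJ : IsInvariantIdeal F v₀ J) {p : MvPolynomial (Fin N) ℝ} (hp : p ∈ J) (j : ℕ) :
    (lieDeriv F)^[j] p ∈ J :=
  MapsTo.iterate hJ.2 j hp

theorem isInvariantIdeal_iterateIdeal {v₀ : Fin N → ℝ} {p : MvPolynomial (Fin N) ℝ} {m : ℕ}
    (hvanish : ∀ j ≤ m, eval v₀ ((lieDeriv F)^[j] p) = 0)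
    (hmem : (lieDeriv F)^[m + 1] p ∈ iterateIdeal (lieDeriv F) p m) :
    IsInvariantIdeal F v₀ (iterateIdeal (lieDeriv F) p m) := by
  have hker : iterateIdeal (lieDeriv F) p m ≤ RingHom.ker (eval v₀) :=
    iterateIdeal_le_iff.2 hvanish
  rw [← coe_lieDerivation] at hmem
  have hclosed := (lieDerivation F).mapsTo_iterateIdeal hmem
  rw [coe_lieDerivation] at hclosed
  exact ⟨fun q hq => hker hq, hclosed⟩

theorem hasDerivAt_eval_lieDeriv {x : ℝ → Fin N → ℝ} {t : ℝ}
    (hx : HasDerivAt x (fun i => eval (x t) (F i)) t) (q : MvPolynomial (Fin N) ℝ) :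
    HasDerivAt (fun s => eval (x s) q) (eval (x t) (lieDeriv F q)) t := by
  induction q using MvPolynomial.induction_on with
  | C a => simpa [← coe_lieDerivation] using hasDerivAt_const t a
  | add p q hp hq => simpa only [← coe_lieDerivation, map_add] using hp.fun_add hq
  | mul_X p i hp =>
    have hxi : HasDerivAt (fun s => x s i) (eval (x t) (F i)) t := hasDerivAt_pi.1 hx i
    rw [← coe_lieDerivation, Derivation.leibniz, coe_lieDerivation, lieDeriv_X]
    simpa only [map_mul, map_add, smul_eq_mul, eval_X, add_comm, mul_comm] using hp.fun_mul hxi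

theorem iteratedDeriv_eval_eqOn {x : ℝ → Fin N → ℝ} {D : Set ℝ} (hD : IsOpen D)
    (hsol : ∀ t ∈ D, HasDerivAt x (fun i => eval (x t) (F i)) t) (q : MvPolynomial (Fin N) ℝ)
    (n : ℕ) :
    EqOn (iteratedDeriv n fun t => eval (x t) q) (fun t => eval (x t) ((lieDeriv F)^[n] q)) D := by
  induction n with
  | zero => intro t _; simp
  | succ n ih =>
    intro t ht
    rw [iteratedDeriv_succ, (eventuallyEq_of_mem (hD.mem_nhds ht) ih).deriv_eq,
      Function.iterate_succ_apply']
    exact (hasDerivAt_eval_lieDeriv (hsol t ht) _).deriv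

theorem IsInvariantIdeal.subset_Zset {v₀ : Fin N → ℝ} {J : Ideal (MvPolynomial (Fin N) ℝ)}
    (hJ : IsInvariantIdeal F v₀ J) {x : ℝ → Fin N → ℝ} {D : Set ℝ} (hD : IsOpen D)
    (hDc : D.OrdConnected) (h0 : (0 : ℝ) ∈ D)
    (hsol : ∀ t ∈ D, HasDerivAt x (fun i => eval (x t) (F i)) t) (hx0 : x 0 = v₀)
    (han : ∀ i, AnalyticOnNhd ℝ (fun t => x t i) D) :
    (J : Set (MvPolynomial (Fin N) ℝ)) ⊆ Zset x D := by
  intro q hq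
  have hanalytic : AnalyticOnNhd ℝ (fun t => eval (x t) q) D :=
    AnalyticOnNhd.aeval_mvPolynomial han q
  have hderiv (n : ℕ) : iteratedDeriv n (fun t => eval (x t) q) 0 = 0 := by
    rw [iteratedDeriv_eval_eqOn hD hsol q n h0]
    simpa only [hx0] using hJ.1 _ (hJ.iterate_mem hq n)
  exact hanalytic.eqOn_zero_of_iteratedDeriv_eq_zero hDc.isPreconnected h0 hderiv

end LieDerivative

theorem stmt8_general
    (N : ℕ)
    (F : Fin N → MvPolynomial (Fin N) ℝ) (v₀ : Fin N → ℝ)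
    (D : Set ℝ) (hD : IsOpen D) (hDc : D.OrdConnected) (h0 : (0 : ℝ) ∈ D)
    (x : ℝ → Fin N → ℝ)
    (hsol : ∀ t ∈ D, HasDerivAt x (fun i => eval (x t) (F i)) t)
    (hx0 : x 0 = v₀)
    (han : ∀ i, AnalyticOnNhd ℝ (fun t => x t i) D)
    (p : MvPolynomial (Fin N) ℝ) (m : ℕ)
    (hvanish : ∀ j ≤ m, eval v₀ ((lieDeriv F)^[j] p) = 0)
    (hmem : (lieDeriv F)^[m + 1] p ∈
      Ideal.span {q | ∃ j ≤ m, q = (lieDeriv F)^[j] p}) :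
    IsInvariantIdeal F v₀ (Ideal.span {q | ∃ j ≤ m, q = (lieDeriv F)^[j] p}) ∧
    p ∈ Ideal.span {q | ∃ j ≤ m, q = (lieDeriv F)^[j] p} ∧
    (∀ J : Ideal (MvPolynomial (Fin N) ℝ), IsInvariantIdeal F v₀ J → p ∈ J →
      Ideal.span {q | ∃ j ≤ m, q = (lieDeriv F)^[j] p} ≤ J) ∧
    (∀ j : ℕ, (lieDeriv F)^[j] p ∈ Ideal.span {q | ∃ j ≤ m, q = (lieDeriv F)^[j] p}) ∧
    p ∈ Zset x D := by
  have hinv := isInvariantIdeal_iterateIdeal hvanish hmem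
  have hp : p ∈ iterateIdeal (lieDeriv F) p m := iterate_mem_iterateIdeal (j := 0) m.zero_le
  exact ⟨hinv, hp, fun J hJ hpJ => iterateIdeal_le_iff.2 fun j _ => hJ.iterate_mem hpJ j,
    hinv.iterate_mem hp, hinv.subset_Zset hD hDc h0 hsol hx0 han hp⟩

/-- correctness of the naive algorithm: if `(𝓛⁽ʲ⁾p)(v₀) = 0` for all
`j ≤ m` and `𝓛⁽ᵐ⁺¹⁾p` lies in the ideal `I_m` generated by `{𝓛⁽⁰⁾p, …, 𝓛⁽ᵐ⁾p}`,
then `I_m` is the smallest `Φ`-invariant containing `p`; in particular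
`𝓛⁽ʲ⁾p ∈ I_m` for all `j` and `p ∈ Z_Φ`. -/
theorem stmt8
    (N : ℕ) (hN : 1 ≤ N)
    (F : Fin N → MvPolynomial (Fin N) ℝ) (v₀ : Fin N → ℝ)
    (D : Set ℝ) (hD : IsOpen D) (hDc : D.OrdConnected) (h0 : (0 : ℝ) ∈ D)
    (x : ℝ → Fin N → ℝ)
    (hsol : ∀ t ∈ D, HasDerivAt x (fun i => eval (x t) (F i)) t)
    (hx0 : x 0 = v₀)
    (han : ∀ i, AnalyticOnNhd ℝ (fun t => x t i) D)
    (p : MvPolynomial (Fin N) ℝ) (m : ℕ)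
    (hvanish : ∀ j ≤ m, eval v₀ ((lieDeriv F)^[j] p) = 0)
    (hmem : (lieDeriv F)^[m + 1] p ∈
      Ideal.span {q | ∃ j ≤ m, q = (lieDeriv F)^[j] p}) :
    IsInvariantIdeal F v₀ (Ideal.span {q | ∃ j ≤ m, q = (lieDeriv F)^[j] p}) ∧
    p ∈ Ideal.span {q | ∃ j ≤ m, q = (lieDeriv F)^[j] p} ∧
    (∀ J : Ideal (MvPolynomial (Fin N) ℝ), IsInvariantIdeal F v₀ J → p ∈ J →
      Ideal.span {q | ∃ j ≤ m, q = (lieDeriv F)^[j] p} ≤ J) ∧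
    (∀ j : ℕ, (lieDeriv F)^[j] p ∈ Ideal.span {q | ∃ j ≤ m, q = (lieDeriv F)^[j] p}) ∧
    p ∈ Zset x D :=
  stmt8_general N F v₀ D hD hDc h0 x hsol hx0 han p m hvanish hmem
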